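/- The direct product monoid A^1 × B^1 does not satisfy the identity x·t·y²·x ≈ x·t·x·y²·x: the second coordinate B^1 (the opposite of A^1) fails it, by the dual of the witness x = e, y = d, t = b in A^1. -/

import Mathlib

/-- The semigroup A = {0,a,b,c,d,e}. -/
inductive Asg | z | a | b | c | d | e
deriving DecidableEq

instance instFintypeAsg : Fintype Asg :=
  ⟨{.z, .a, .b, .c, .d, .e}, fun x => by cases x <;> simp⟩

namespace Asg
def mul : Asg → Asg → Asg
  | .a, .e => .a
  | .b, .e => .b
  | .c, .b => .a
  | .c, .d => .c
  | .d, .b => .b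
  | .d, .d => .d
  | .e, .a => .a
  | .e, .b => .a
  | .e, .c => .c
  | .e, .d => .c
  | .e, .e => .e
  | _, _ => .z
end Asg

/-- The monoid A¹ obtained by adjoining an identity to A. -/
inductive A1 | z | a | b | c | d | e | one
deriving DecidableEq

instance instFintypeA1 : Fintype A1 :=
  ⟨{.z, .a, .b, .c, .d, .e, .one}, fun x => by cases x <;> simp⟩

namespace A1
def mul : A1 → A1 → A1
  | .one, x => x
  | x, .one => x
  | .a, .e => .a
  | .b, .e => .b
  | .c, .b => .a
  | .c, .d => .c
  | .d, .b => .b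
  | .d, .d => .d
  | .e, .a => .a
  | .e, .b => .a
  | .e, .c => .c
  | .e, .d => .c
  | .e, .e => .e
  | _, _ => .z

instance : Mul A1 := ⟨A1.mul⟩
instance : One A1 := ⟨A1.one⟩

instance : Monoid A1 where
  mul_assoc := by decide
  one_mul := by decide
  mul_one := by decide
end A1

/-- A¹ × B¹ does not satisfy the identity xty²x ≈ xtxy²x. -/
theorem prod_fails_xty2x :
    ¬ ∀ x y t : A1 × A1ᵐᵒᵖ, x * t * y ^ 2 * x = x * t * x * y ^ 2 * x := by
  intro h
  have := h (1, .op .e) (1, .op .d) (1, .op .b)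
  simp only [Prod.ext_iff] at this
  revert this
  decide
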